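/- Let X be a Banach space having property (β_p) for some p > 1 with constant C_β > 0. Then there exists C > 0, depending only on p and C_β, such that for every n ≥ 2 and every map f: [ℕ]^{≤n} → X satisfying λ·d_T(m̄,n̄) ≤ ‖f(m̄) − f(n̄)‖ ≤ K·λ·d_T(m̄,n̄) for all m̄,n̄ (for some λ > 0 and K ≥ 1), one has K ≥ C·(log₂ n)^{1/p}. -/

import Mathlib

set_option maxHeartbeats 1000000

/-- Length of the longest common initial segment of two lists. -/
def lcp : List ℕ → List ℕ → ℕ
  | a :: as, b :: bs => if a = b then lcp as bs + 1 else 0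
  | _, _ => 0

/-- The tree metric on the countably branching tree (encoded as strictly increasing lists):
`d_T(m̄,n̄) = (|m̄| − |ū|) + (|n̄| − |ū|)` where `ū` is the longest common initial segment. -/
def treeDist (m n : List ℕ) : ℕ := (m.length - lcp m n) + (n.length - lcp m n)

lemma lcp_nil_left (b : List ℕ) : lcp [] b = 0 := by cases b <;> rfl

lemma lcp_nil_right (a : List ℕ) : lcp a [] = 0 := by cases a <;> rfl

lemma lcp_cons (a b : ℕ) (as bs : List ℕ) :
    lcp (a :: as) (b :: bs) = if a = b then lcp as bs + 1 else 0 := rfl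

lemma lcp_le_left : ∀ a b : List ℕ, lcp a b ≤ a.length
  | [], b => by simp [lcp_nil_left]
  | a :: as, [] => by simp [lcp_nil_right]
  | a :: as, b :: bs => by
    rw [lcp_cons]
    split
    · simpa using lcp_le_left as bs
    · simp

lemma lcp_comm : ∀ a b : List ℕ, lcp a b = lcp b a
  | [], b => by simp [lcp_nil_left, lcp_nil_right]
  | a :: as, [] => by simp [lcp_nil_left, lcp_nil_right]
  | a :: as, b :: bs => by
    rw [lcp_cons, lcp_cons, lcp_comm as bs]
    by_cases h : a = b
    · simp [h]
    · simp [h, Ne.symm h]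

lemma lcp_le_right (a b : List ℕ) : lcp a b ≤ b.length := by
  rw [lcp_comm]; exact lcp_le_left b a

lemma lcp_self_append : ∀ (a r : List ℕ), lcp a (a ++ r) = a.length
  | [], r => by simp [lcp_nil_left]
  | a :: as, r => by simp [lcp_cons, lcp_self_append as r]

lemma lcp_append_ne : ∀ (u : List ℕ) {x y : ℕ} (r s : List ℕ), x ≠ y →
    lcp (u ++ x :: r) (u ++ y :: s) = u.length
  | [], x, y, r, s, h => by simp [lcp_cons, h]
  | c :: u, x, y, r, s, h => by
    simp [lcp_cons, lcp_append_ne u r s h]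

lemma lcp_take : ∀ a b : List ℕ, a.take (lcp a b) = b.take (lcp a b)
  | [], b => by simp [lcp_nil_left]
  | a :: as, [] => by simp [lcp_nil_right]
  | a :: as, b :: bs => by
    rw [lcp_cons]
    split
    · next h => simp [h, lcp_take as bs]
    · simp

lemma treeDist_append_single (u : List ℕ) (x : ℕ) : treeDist u (u ++ [x]) = 1 := by
  simp [treeDist, lcp_self_append]

lemma treeDist_append_ne (u : List ℕ) {x y : ℕ} (h : x ≠ y) :
    treeDist (u ++ [x]) (u ++ [y]) = 2 := by
  simp [treeDist, lcp_append_ne u [] [] h]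

def stepF (mf : List ℕ → ℕ) (acc : List ℕ) (k : ℕ) : List ℕ :=
  acc ++ [acc.getLastD 0 + k + 1, mf (acc ++ [acc.getLastD 0 + k + 1])]

def iotaF (mf : List ℕ → ℕ) (a : List ℕ) : List ℕ := a.foldl (stepF mf) []

lemma foldl_length (mf : List ℕ → ℕ) :
    ∀ (a acc : List ℕ), (a.foldl (stepF mf) acc).length = acc.length + 2 * a.length
  | [], acc => by simp
  | k :: a', acc => by
    rw [List.foldl_cons, foldl_length mf a']
    simp [stepF]; ring

lemma foldl_prefix (mf : List ℕ → ℕ) :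
    ∀ (a acc : List ℕ), acc <+: a.foldl (stepF mf) acc
  | [], acc => by simp
  | k :: a', acc => by
    rw [List.foldl_cons]
    exact List.IsPrefix.trans ⟨_, rfl⟩ (foldl_prefix mf a' _)

lemma chain'_append_single : ∀ {l : List ℕ} {x : ℕ}, List.Chain' (· < ·) l →
    l.getLastD 0 < x → List.Chain' (· < ·) (l ++ [x])
  | [], x, _, _ => by simp [List.Chain', List.isChain_singleton]
  | [c], x, _, hx => by
    have hcx : c < x := by simpa [List.getLastD_cons] using hx
    simp [List.Chain', List.isChain_cons_cons, hcx]
  | c :: d :: t, x, h, hx => by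
    rw [List.cons_append, List.cons_append]
    unfold List.Chain' at h ⊢
    rw [List.isChain_cons_cons]
    rw [List.isChain_cons_cons] at h
    refine ⟨h.1, ?_⟩
    rw [← List.cons_append]
    exact chain'_append_single h.2 (by simpa [List.getLastD_cons] using hx)

lemma getLastD_append_single' : ∀ (l : List ℕ) (x d : ℕ), (l ++ [x]).getLastD d = x
  | [], x, d => rfl
  | c :: l, x, d => by
    rw [List.cons_append, List.getLastD_cons]
    exact getLastD_append_single' l x c

lemma getLastD_append_single (l : List ℕ) (x : ℕ) : (l ++ [x]).getLastD 0 = x :=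
  getLastD_append_single' l x 0

lemma chain'_stepF (mf : List ℕ → ℕ) (hmf : ∀ s, s.getLastD 0 < mf s)
    {acc : List ℕ} (h : List.Chain' (· < ·) acc) (k : ℕ) :
    List.Chain' (· < ·) (stepF mf acc k) := by
  rw [stepF, show acc.getLastD 0 + k + 1 = acc.getLastD 0 + k + 1 from rfl,
    show (acc ++ [acc.getLastD 0 + k + 1, mf (acc ++ [acc.getLastD 0 + k + 1])]) =
      (acc ++ [acc.getLastD 0 + k + 1]) ++ [mf (acc ++ [acc.getLastD 0 + k + 1])] by simp]
  refine chain'_append_single (chain'_append_single h (by omega)) ?_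
  exact hmf _

lemma foldl_chain' (mf : List ℕ → ℕ) (hmf : ∀ s, s.getLastD 0 < mf s) :
    ∀ (a acc : List ℕ), List.Chain' (· < ·) acc → List.Chain' (· < ·) (a.foldl (stepF mf) acc)
  | [], acc, h => h
  | k :: a', acc, h => by
    rw [List.foldl_cons]
    exact foldl_chain' mf hmf a' _ (chain'_stepF mf hmf h k)

lemma foldl_lcp (mf : List ℕ → ℕ) :
    ∀ (a b acc : List ℕ),
      lcp (a.foldl (stepF mf) acc) (b.foldl (stepF mf) acc) = acc.length + 2 * lcp a b
  | [], b, acc => by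
    obtain ⟨r, hr⟩ := foldl_prefix mf b acc
    simp only [List.foldl_nil, ← hr, lcp_self_append, lcp_nil_left]
    omega
  | k :: a', [], acc => by
    obtain ⟨r, hr⟩ := foldl_prefix mf (k :: a') acc
    rw [lcp_comm, List.foldl_nil, ← hr, lcp_self_append]
    simp [lcp]
  | k :: a', k' :: b', acc => by
    by_cases hk : k = k'
    · subst hk
      rw [List.foldl_cons, List.foldl_cons, foldl_lcp mf a' b' _]
      simp [stepF, lcp_cons]; ring
    · have h1 : stepF mf acc k <+: (k :: a').foldl (stepF mf) acc := by
        rw [List.foldl_cons]; exact foldl_prefix mf a' _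
      have h2 : stepF mf acc k' <+: (k' :: b').foldl (stepF mf) acc := by
        rw [List.foldl_cons]; exact foldl_prefix mf b' _
      obtain ⟨r1, hr1⟩ := h1
      obtain ⟨r2, hr2⟩ := h2
      rw [← hr1, ← hr2]
      rw [stepF, stepF]
      simp only [List.append_assoc, List.cons_append]
      rw [lcp_append_ne acc _ _ (by omega)]
      simp [lcp_cons, hk]

/-- **`(β_p)` Embedding Obstruction.**
If a Banach space `X` has property `(β_p)` for some `p > 1` with constant `C_β > 0`, then
there is `C > 0` depending only on `p` and `C_β` such that any bi-Lipschitz embedding of the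
countably branching tree of height `n ≥ 2` into `X` with scaling `λ > 0` and constant
`K ≥ 1` satisfies `K ≥ C·(log₂ n)^{1/p}`. -/
theorem beta_p_tree_embedding_obstruction.{u} (p Cβ : ℝ) (hp : 1 < p) (hCβ : 0 < Cβ) :
    ∃ C > (0 : ℝ),
      ∀ (X : Type u) [NormedAddCommGroup X] [NormedSpace ℝ X] [CompleteSpace X],
        (∀ t : ℝ, 0 < t → ∀ z : X, ‖z‖ ≤ 1 → ∀ x : ℕ → X, (∀ i, ‖x i‖ ≤ 1) →
          (∀ i j : ℕ, i ≠ j → t ≤ ‖x i - x j‖) →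
          ∃ i₀ : ℕ, ‖(1 / 2 : ℝ) • (z - x i₀)‖ ≤ 1 - t ^ p / Cβ) →
        ∀ n : ℕ, 2 ≤ n → ∀ f : List ℕ → X, ∀ lam K : ℝ, 0 < lam → 1 ≤ K →
          (∀ m m' : List ℕ, List.Chain' (· < ·) m → List.Chain' (· < ·) m' →
            m.length ≤ n → m'.length ≤ n →
            lam * (treeDist m m' : ℝ) ≤ ‖f m - f m'‖ ∧
            ‖f m - f m'‖ ≤ K * lam * (treeDist m m' : ℝ)) →
          C * Real.logb 2 (n : ℝ) ^ (1 / p) ≤ K := by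
  have h2p : (0:ℝ) < 2 ^ p := Real.rpow_pos_of_pos two_pos p
  refine ⟨(2 ^ p / Cβ / 2) ^ (1 / p), Real.rpow_pos_of_pos (by positivity) _, ?_⟩
  intro X _ _ _ hβ n hn f₀ lam₀ K₀ hlam₀ hK₀ hf₀
  have tri : ∀ u v w : X, ‖u - w‖ ≤ ‖u - v‖ + ‖v - w‖ := fun u v w => by
    simpa [sub_add_sub_cancel] using norm_add_le (u - v) (v - w)
  -- main induction
  have main : ∀ h : ℕ, ∀ f : List ℕ → X, ∀ lam K : ℝ, 0 < lam → 1 ≤ K →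
      (∀ m m' : List ℕ, List.Chain' (· < ·) m → List.Chain' (· < ·) m' →
        m.length ≤ h → m'.length ≤ h →
        lam * (treeDist m m' : ℝ) ≤ ‖f m - f m'‖ ∧
        ‖f m - f m'‖ ≤ K * lam * (treeDist m m' : ℝ)) →
      1 + (2 ^ p / Cβ) * (Nat.log 2 h : ℝ) ≤ K ^ p := by
    intro h
    induction h using Nat.strong_induction_on with
    | _ h IH =>
    intro f lam K hlam hK hf
    by_cases hh2 : h < 2
    · rw [Nat.log_eq_zero_iff.2 (Or.inl hh2)]
      simpa using Real.one_le_rpow hK (by linarith)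
    push_neg at hh2
    have hK0 : (0:ℝ) < K := lt_of_lt_of_le one_pos hK
    have hKlam : (0:ℝ) < K * lam := mul_pos hK0 hlam
    have htp : (0:ℝ) < 2 / K := by positivity
    -- Key improvement lemma from (β_p)
    have keyA : ∀ s : List ℕ, ∃ m, s.getLastD 0 < m ∧
        (List.Chain' (· < ·) s → 1 ≤ s.length → s.length + 1 ≤ h →
          ‖f s.dropLast - f (s ++ [m])‖ ≤ 2 * K * lam * (1 - (2 / K) ^ p / Cβ)) := by
      intro s
      by_cases hs : List.Chain' (· < ·) s ∧ 1 ≤ s.length ∧ s.length + 1 ≤ h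
      swap
      · exact ⟨s.getLastD 0 + 1, by omega, fun h1 h2 h3 => absurd ⟨h1, h2, h3⟩ hs⟩
      obtain ⟨hs1, hs2, hs3⟩ := hs
      have hsne : s ≠ [] := List.length_pos_iff.mp (by omega)
      have hds : s.dropLast ++ [s.getLast hsne] = s := List.dropLast_append_getLast hsne
      have hchain_d : List.Chain' (· < ·) s.dropLast :=
        hs1.prefix ⟨[s.getLast hsne], hds⟩
      have hlen_d : s.dropLast.length ≤ h := by
        rw [List.length_dropLast]; omega
      have hchain_e : ∀ i : ℕ, List.Chain' (· < ·) (s ++ [s.getLastD 0 + 1 + i]) :=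
        fun i => chain'_append_single hs1 (by omega)
      have hlen_e : ∀ i : ℕ, (s ++ [s.getLastD 0 + 1 + i]).length ≤ h := by
        intro i; rw [List.length_append]; simpa using hs3
      set z : X := (K * lam)⁻¹ • (f s.dropLast - f s) with hzdef
      set x : ℕ → X := fun i => (K * lam)⁻¹ • (f (s ++ [s.getLastD 0 + 1 + i]) - f s) with hxdef
      have hnorm_le : ∀ v : X, ‖v‖ ≤ K * lam → ‖(K * lam)⁻¹ • v‖ ≤ 1 := by
        intro v hv
        rw [norm_smul, norm_inv, Real.norm_eq_abs, abs_of_pos hKlam]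
        calc (K * lam)⁻¹ * ‖v‖ ≤ (K * lam)⁻¹ * (K * lam) := by gcongr
          _ = 1 := inv_mul_cancel₀ (ne_of_gt hKlam)
      have hd1 : treeDist s.dropLast s = 1 := by
        have := treeDist_append_single s.dropLast (s.getLast hsne)
        rwa [hds] at this
      have hznorm : ‖z‖ ≤ 1 := by
        apply hnorm_le
        have := (hf s.dropLast s hchain_d hs1 hlen_d (by omega)).2
        rw [hd1] at this; simpa using this
      have hxnorm : ∀ i, ‖x i‖ ≤ 1 := by
        intro i
        apply hnorm_le
        have := (hf (s ++ [s.getLastD 0 + 1 + i]) s (hchain_e i) hs1 (hlen_e i) (by omega)).2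
        have h2 : treeDist (s ++ [s.getLastD 0 + 1 + i]) s = 1 := by
          rw [treeDist, lcp_comm, lcp_self_append]; simp
        rw [h2] at this
        simpa using this
      have hsep : ∀ i j : ℕ, i ≠ j → 2 / K ≤ ‖x i - x j‖ := by
        intro i j hij
        have hxx : x i - x j =
            (K * lam)⁻¹ • (f (s ++ [s.getLastD 0 + 1 + i]) - f (s ++ [s.getLastD 0 + 1 + j])) := by
          rw [hxdef]; simp only [← smul_sub]
          congr 1
          abel
        have hd2 : treeDist (s ++ [s.getLastD 0 + 1 + i]) (s ++ [s.getLastD 0 + 1 + j]) = 2 :=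
          treeDist_append_ne s (by omega)
        have := (hf (s ++ [s.getLastD 0 + 1 + i]) (s ++ [s.getLastD 0 + 1 + j])
          (hchain_e i) (hchain_e j) (hlen_e i) (hlen_e j)).1
        rw [hd2] at this
        rw [hxx, norm_smul, norm_inv, Real.norm_eq_abs, abs_of_pos hKlam]
        rw [div_le_iff₀ hK0] -- 2/K ≤ a ↔ 2 ≤ a * K
        calc (2:ℝ) = (K * lam)⁻¹ * (lam * 2) * K := by field_simp
          _ ≤ (K * lam)⁻¹ * ‖_ - _‖ * K := by gcongr; exact_mod_cast this
      obtain ⟨i₀, hi₀⟩ := hβ (2 / K) htp z hznorm x hxnorm hsep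
      refine ⟨s.getLastD 0 + 1 + i₀, by omega, fun _ _ _ => ?_⟩
      have hzx : (1 / 2 : ℝ) • (z - x i₀) =
          ((2 * (K * lam))⁻¹) • (f s.dropLast - f (s ++ [s.getLastD 0 + 1 + i₀])) := by
        rw [hzdef, hxdef]
        simp only [← smul_sub]
        rw [smul_smul]
        congr 1
        · field_simp
        · abel
      rw [hzx, norm_smul, norm_inv, Real.norm_eq_abs, abs_of_pos (by positivity)] at hi₀
      have h2Klam : (0:ℝ) < 2 * (K * lam) := by positivity
      calc ‖f s.dropLast - f (s ++ [s.getLastD 0 + 1 + i₀])‖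
          = (2 * (K * lam)) * ((2 * (K * lam))⁻¹ * ‖f s.dropLast - f (s ++ [s.getLastD 0 + 1 + i₀])‖) := by
            field_simp
        _ ≤ (2 * (K * lam)) * (1 - (2 / K) ^ p / Cβ) := by
            apply mul_le_mul_of_nonneg_left hi₀ (le_of_lt h2Klam)
        _ = 2 * K * lam * (1 - (2 / K) ^ p / Cβ) := by ring
    choose mfun hmgt hmbound using keyA
    set g : List ℕ → X := fun a => f (iotaF mfun a) with hgdef
    set h' := h / 2 with hh'def
    have hh'1 : 1 ≤ h' := by omega
    have h2h' : 2 * h' ≤ h := by omega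
    have hh'lt : h' < h := by omega
    have hilen : ∀ a : List ℕ, (iotaF mfun a).length = 2 * a.length := fun a => by
      simpa [iotaF] using foldl_length mfun a []
    have hichain : ∀ a : List ℕ, List.Chain' (· < ·) (iotaF mfun a) := fun a =>
      foldl_chain' mfun hmgt a [] List.isChain_nil
    have hidist : ∀ a b : List ℕ, treeDist (iotaF mfun a) (iotaF mfun b) = 2 * treeDist a b := by
      intro a b
      have hl := foldl_lcp mfun a b []
      simp only [List.length_nil, zero_add] at hl
      have la := lcp_le_left a b
      have lb := lcp_le_right a b
      rw [treeDist, treeDist]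
      rw [show iotaF mfun a = a.foldl (stepF mfun) [] from rfl,
          show iotaF mfun b = b.foldl (stepF mfun) [] from rfl] at *
      rw [hl, foldl_length, foldl_length]
      simp only [List.length_nil, zero_add]
      omega
    set K' : ℝ := K * (1 - (2 / K) ^ p / Cβ) with hK'def
    have hedge : ∀ (w : List ℕ) (k : ℕ), w.length + 1 ≤ h' →
        ‖g (w ++ [k]) - g w‖ ≤ K' * (2 * lam) := by
      intro w k hwlen
      have hfold : iotaF mfun (w ++ [k]) = stepF mfun (iotaF mfun w) k := by
        simp [iotaF, List.foldl_append]
      set u := iotaF mfun w with hudef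
      set nn := u.getLastD 0 + k + 1 with hnndef
      have hst : stepF mfun u k = (u ++ [nn]) ++ [mfun (u ++ [nn])] := by
        rw [stepF]; simp [hnndef]
      have hs1 : List.Chain' (· < ·) (u ++ [nn]) :=
        chain'_append_single (hichain w) (by omega)
      have hs2 : 1 ≤ (u ++ [nn]).length := by simp
      have hs3 : (u ++ [nn]).length + 1 ≤ h := by
        have hu : u.length = 2 * w.length := hilen w
        rw [List.length_append, hu]
        simp only [List.length_cons, List.length_nil]
        omega
      have hb := hmbound (u ++ [nn]) hs1 hs2 hs3
      rw [List.dropLast_concat] at hb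
      calc ‖g (w ++ [k]) - g w‖
          = ‖f u - f ((u ++ [nn]) ++ [mfun (u ++ [nn])])‖ := by
            rw [hgdef]; simp only [← hudef, hfold, hst]
            rw [norm_sub_rev]
        _ ≤ 2 * K * lam * (1 - (2 / K) ^ p / Cβ) := hb
        _ = K' * (2 * lam) := by rw [hK'def]; ring
    have hgl : ∀ a b : List ℕ, List.Chain' (· < ·) a → List.Chain' (· < ·) b →
        a.length ≤ h' → b.length ≤ h' →
        (2 * lam) * (treeDist a b : ℝ) ≤ ‖g a - g b‖ := by
      intro a b ha hb hla hlb
      have := (hf (iotaF mfun a) (iotaF mfun b) (hichain a) (hichain b)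
        (by rw [hilen]; omega) (by rw [hilen]; omega)).1
      rw [hidist] at this
      calc (2 * lam) * (treeDist a b : ℝ) = lam * ((2 * treeDist a b : ℕ) : ℝ) := by
            push_cast; ring
        _ ≤ _ := this
    have hK'1 : 1 ≤ K' := by
      have h1 := hgl [] [0] List.isChain_nil (List.isChain_singleton 0) (by simp) (by simpa using hh'1)
      have h2 := hedge [] 0 (by simpa using hh'1)
      have hd : treeDist [] [0] = 1 := by simp [treeDist, lcp_nil_left]
      rw [hd] at h1
      simp only [List.nil_append] at h2
      rw [norm_sub_rev] at h2
      push_cast at h1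
      nlinarith
    have hanc : ∀ (d : ℕ) (a : List ℕ) (j : ℕ), j + d = a.length → a.length ≤ h' →
        ‖g a - g (a.take j)‖ ≤ (K' * (2 * lam)) * d := by
      intro d
      induction d with
      | zero =>
        intro a j hj hla
        have : a.take j = a := List.take_of_length_le (by omega)
        rw [this]
        simp
      | succ d IHd =>
        intro a j hj hla
        have hjlt : j < a.length := by omega
        have hsplit : a.take (j + 1) = a.take j ++ [a[j]] := by
          rw [List.take_succ, List.getElem?_eq_getElem hjlt]
          rfl
        have e1 := hedge (a.take j) (a[j]'hjlt) (by rw [List.length_take]; omega)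
        rw [← hsplit] at e1
        have e2 := IHd a (j + 1) (by omega) hla
        calc ‖g a - g (a.take j)‖
            ≤ ‖g a - g (a.take (j + 1))‖ + ‖g (a.take (j + 1)) - g (a.take j)‖ := tri _ _ _
          _ ≤ (K' * (2 * lam)) * d + K' * (2 * lam) := add_le_add e2 e1
          _ = (K' * (2 * lam)) * (d + 1) := by ring
          _ = (K' * (2 * lam)) * ((d + 1 : ℕ) : ℝ) := by push_cast; ring
    have hgu : ∀ a b : List ℕ, a.length ≤ h' → b.length ≤ h' →
        ‖g a - g b‖ ≤ K' * (2 * lam) * (treeDist a b : ℝ) := by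
      intro a b hla hlb
      have hla' := lcp_le_left a b
      have hlb' := lcp_le_right a b
      have h1 := hanc (a.length - lcp a b) a (lcp a b) (by omega) hla
      have h2 := hanc (b.length - lcp a b) b (lcp a b) (by omega) hlb
      rw [lcp_take a b] at h1
      calc ‖g a - g b‖ ≤ ‖g a - g (b.take (lcp a b))‖ + ‖g (b.take (lcp a b)) - g b‖ := tri _ _ _
        _ ≤ (K' * (2 * lam)) * ((a.length - lcp a b : ℕ) : ℝ)
            + (K' * (2 * lam)) * ((b.length - lcp a b : ℕ) : ℝ) := by
            refine add_le_add h1 ?_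
            rw [norm_sub_rev]
            exact h2
        _ = K' * (2 * lam) * (treeDist a b : ℝ) := by
            rw [treeDist]
            push_cast [Nat.cast_sub hla', Nat.cast_sub hlb']
            ring
    have hIH := IH h' hh'lt g (2 * lam) K' (by linarith) hK'1
      (fun m m' hm hm' h1 h2 => ⟨hgl m m' hm hm' h1 h2, hgu m m' h1 h2⟩)
    -- arithmetic
    have hδ : (0:ℝ) ≤ (2 / K) ^ p / Cβ := by positivity
    have h1δ : (0:ℝ) < 1 - (2 / K) ^ p / Cβ := by
      by_contra hcon
      push_neg at hcon
      nlinarith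
    have hKp' : K' ^ p ≤ K ^ p * (1 - (2 / K) ^ p / Cβ) := by
      rw [hK'def, Real.mul_rpow (le_of_lt hK0) (le_of_lt h1δ)]
      have h1 : (1 - (2 / K) ^ p / Cβ) ^ p ≤ (1 - (2 / K) ^ p / Cβ) := by
        have := Real.rpow_le_rpow_of_exponent_ge h1δ (by linarith) (le_of_lt hp)
        rwa [Real.rpow_one] at this
      have h2 : (0:ℝ) ≤ K ^ p := Real.rpow_nonneg (le_of_lt hK0) p
      nlinarith
    have hKpδ : K ^ p * ((2 / K) ^ p / Cβ) = 2 ^ p / Cβ := by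
      rw [Real.div_rpow (by norm_num) (le_of_lt hK0)]
      have hKp0 : K ^ p ≠ 0 := ne_of_gt (Real.rpow_pos_of_pos hK0 p)
      field_simp
    have hfin : K' ^ p + 2 ^ p / Cβ ≤ K ^ p := by
      have : K ^ p * (1 - (2 / K) ^ p / Cβ) = K ^ p - 2 ^ p / Cβ := by
        rw [mul_sub, mul_one, hKpδ]
      linarith [hKp']
    have hlog : Nat.log 2 h = Nat.log 2 h' + 1 := by
      rw [hh'def, Nat.log_div_base]
      have : 0 < Nat.log 2 h := Nat.log_pos one_lt_two hh2
      omega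
    rw [hlog]
    push_cast
    linarith [hIH]
  -- conclude
  have hmain := main n f₀ lam₀ K₀ hlam₀ hK₀ hf₀
  have hK0 : (0:ℝ) < K₀ := lt_of_lt_of_le one_pos hK₀
  have hn1 : 0 < Nat.log 2 n := Nat.log_pos one_lt_two hn
  have hn0 : (1:ℝ) ≤ (n:ℝ) := by exact_mod_cast le_trans (by norm_num) hn
  have hlogb_nonneg : 0 ≤ Real.logb 2 (n:ℝ) := Real.logb_nonneg one_lt_two hn0
  have hlogb_le : Real.logb 2 (n:ℝ) ≤ (Nat.log 2 n : ℝ) + 1 := by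
    have hpow : (n:ℝ) ≤ (2:ℝ) ^ (Nat.log 2 n + 1) := by
      exact_mod_cast (Nat.lt_pow_succ_log_self one_lt_two n).le
    calc Real.logb 2 (n:ℝ) ≤ Real.logb 2 ((2:ℝ) ^ (Nat.log 2 n + 1)) :=
          Real.logb_le_logb_of_le one_lt_two (by linarith) hpow
      _ = ((Nat.log 2 n : ℝ) + 1) := by
          rw [Real.logb_pow, Real.logb_self_eq_one one_lt_two]
          push_cast; ring
  have key : (2 ^ p / Cβ / 2) * Real.logb 2 (n:ℝ) ≤ K₀ ^ p := by
    have h2 : Real.logb 2 (n:ℝ) ≤ 2 * (Nat.log 2 n : ℝ) := by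
      have : (1:ℝ) ≤ (Nat.log 2 n : ℝ) := by exact_mod_cast hn1
      linarith
    have hc2 : (0:ℝ) ≤ 2 ^ p / Cβ / 2 := by positivity
    calc (2 ^ p / Cβ / 2) * Real.logb 2 (n:ℝ) ≤ (2 ^ p / Cβ / 2) * (2 * (Nat.log 2 n : ℝ)) :=
          mul_le_mul_of_nonneg_left h2 hc2
      _ = (2 ^ p / Cβ) * (Nat.log 2 n : ℝ) := by ring
      _ ≤ K₀ ^ p - 1 := by linarith [hmain]
      _ ≤ K₀ ^ p := by linarith
  have hp0 : p ≠ 0 := by linarith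
  calc (2 ^ p / Cβ / 2) ^ (1/p) * Real.logb 2 (n:ℝ) ^ (1/p)
      = ((2 ^ p / Cβ / 2) * Real.logb 2 (n:ℝ)) ^ (1/p) :=
        (Real.mul_rpow (by positivity) hlogb_nonneg).symm
    _ ≤ (K₀ ^ p) ^ (1/p) :=
        Real.rpow_le_rpow (mul_nonneg (by positivity) hlogb_nonneg) key (by positivity)
    _ = K₀ := by
        rw [← Real.rpow_mul (le_of_lt hK0), mul_one_div, div_self hp0, Real.rpow_one]
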